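/- arXiv:0901.2375 — 3 statements merged into one kernel-verified Lean document; each statement's English description precedes it below -/
import Mathlib

section
/- Let k ≥ 1 and let A, B be k × k integer matrices whose determinants are units in ℤ (i.e., A and B are invertible over ℤ). Suppose that (i) for all indices l ≠ j and every i, A l i * B j i = 0, and (ii) for every j, ∑_i |A j i * B j i| ≤ 1. Then there exists a permutation σ of Fin k such that for every j: A j i = 0 and B j i = 0 whenever i ≠ σ j, and |A j (σ j)| = 1 and |B j (σ j)| = 1; in other words, A and B are signed permutation matrices supported on the same permutation σ. -/
/-- The linear-algebraic core of **Theorem 3 of the paper**: if `A`, `B` are `k × k`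
integer matrices invertible over `ℤ` such that `A l i * B j i = 0` for all `l ≠ j` and
all `i`, and `∑ i, |A j i * B j i| ≤ 1` for every `j`, then `A` and `B` are signed
permutation matrices supported on one and the same permutation `σ`. -/
theorem signed_permutation_of_intersection_matrices
    (k : ℕ) (hk : 1 ≤ k) (A B : Matrix (Fin k) (Fin k) ℤ)
    (hA : IsUnit A.det) (hB : IsUnit B.det)
    (h1 : ∀ l j : Fin k, l ≠ j → ∀ i : Fin k, A l i * B j i = 0)
    (h2 : ∀ j : Fin k, ∑ i : Fin k, |A j i * B j i| ≤ 1) :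
    ∃ σ : Equiv.Perm (Fin k), ∀ j : Fin k,
      (∀ i : Fin k, i ≠ σ j → A j i = 0 ∧ B j i = 0) ∧
      |A j (σ j)| = 1 ∧ |B j (σ j)| = 1 := by
  classical
  -- no column of A is zero
  have hcolA : ∀ i : Fin k, ¬ (∀ l : Fin k, A l i = 0) := by
    intro i h
    have : A.det = 0 := Matrix.det_eq_zero_of_column_eq_zero i h
    rw [this] at hA
    simp at hA
  -- no row of B is zero
  have hrowB : ∀ j : Fin k, ∃ i : Fin k, B j i ≠ 0 := by
    intro j
    by_contra h
    push_neg at h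
    have : B.det = 0 := Matrix.det_eq_zero_of_row_eq_zero j h
    rw [this] at hB
    simp at hB
  have main : ∀ j : Fin k, ∃ i : Fin k,
      (∀ i' : Fin k, i' ≠ i → B j i' = 0) ∧ |A j i| = 1 ∧ |B j i| = 1 := by
    intro j
    obtain ⟨i₀, hi₀⟩ := hrowB j
    have hAji₀ : A j i₀ ≠ 0 := by
      intro h0
      apply hcolA i₀
      intro l
      by_cases hl : l = j
      · rw [hl]; exact h0
      · have := h1 l j hl i₀
        exact (mul_eq_zero.mp this).resolve_right hi₀
    have ht1 : 1 ≤ |A j i₀ * B j i₀| := Int.one_le_abs (mul_ne_zero hAji₀ hi₀)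
    have hsum := h2 j
    have hsplit : |A j i₀ * B j i₀| + ∑ i ∈ Finset.univ.erase i₀, |A j i * B j i|
        = ∑ i : Fin k, |A j i * B j i| := Finset.add_sum_erase _ (fun i => |A j i * B j i|) (Finset.mem_univ i₀)
    have hnonneg : ∀ i ∈ Finset.univ.erase i₀, (0:ℤ) ≤ |A j i * B j i| :=
      fun i _ => abs_nonneg _
    have hrest : ∑ i ∈ Finset.univ.erase i₀, |A j i * B j i| ≤ 0 := by omega
    have hrest0 : ∀ i ∈ Finset.univ.erase i₀, |A j i * B j i| = 0 := by
      have := (Finset.sum_eq_zero_iff_of_nonneg hnonneg).mp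
        (le_antisymm hrest (Finset.sum_nonneg hnonneg))
      exact this
    have hzero : ∀ i' : Fin k, i' ≠ i₀ → A j i' * B j i' = 0 := by
      intro i' hi'
      have := hrest0 i' (Finset.mem_erase.mpr ⟨hi', Finset.mem_univ _⟩)
      exact abs_eq_zero.mp this
    refine ⟨i₀, ?_, ?_, ?_⟩
    · intro i' hi'
      by_contra hBne
      apply hcolA i'
      intro l
      by_cases hl : l = j
      · rw [hl]
        exact (mul_eq_zero.mp (hzero i' hi')).resolve_right hBne
      · exact (mul_eq_zero.mp (h1 l j hl i')).resolve_right hBne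
    all_goals {
      have hterm1 : |A j i₀ * B j i₀| = 1 := by linarith [hsplit, ht1, hsum, hrest, Finset.sum_nonneg hnonneg]
      have habs : |A j i₀| * |B j i₀| = 1 := by rw [← abs_mul]; exact hterm1
      have h1a : 1 ≤ |A j i₀| := Int.one_le_abs hAji₀
      have h1b : 1 ≤ |B j i₀| := Int.one_le_abs hi₀
      nlinarith }
  choose f hf using main
  have hinj : Function.Injective f := by
    intro j j' hjj'
    by_contra hne
    have hBj' : B j' (f j) ≠ 0 := by
      rw [hjj']
      intro h
      have := (hf j').2.2
      rw [h] at this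
      simp at this
    have : A j (f j) * B j' (f j) = 0 := h1 j j' hne (f j)
    have hAz : A j (f j) = 0 := (mul_eq_zero.mp this).resolve_right hBj'
    have := (hf j).2.1
    rw [hAz] at this
    simp at this
  let σ : Equiv.Perm (Fin k) := Equiv.ofBijective f (Finite.injective_iff_bijective.mp hinj)
  refine ⟨σ, fun j => ⟨?_, (hf j).2.1, (hf j).2.2⟩⟩
  intro i hi
  constructor
  · -- A j i = 0 for i ≠ σ j
    obtain ⟨l, hl⟩ := σ.surjective i
    have hlj : l ≠ j := by
      intro h
      apply hi
      rw [← hl, h]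
    have hBl : B l i ≠ 0 := by
      have := (hf l).2.2
      intro h0
      have hfl : f l = i := hl
      rw [hfl, h0] at this
      simp at this
    have := h1 j l (fun h => hlj h.symm) i
    exact (mul_eq_zero.mp this).resolve_right hBl
  · exact (hf j).1 i hi
end

section
/- For every k ≥ 1, the subgroup of the genus-k surface group G_k generated by a_1,…,a_k is free on these generators: the group homomorphism from the free group FreeGroup (Fin k) to G_k sending the i-th free generator to a_i is injective. Consequently, every element of the subgroup generated by a_1,…,a_k has a unique reduced expression x_1^{λ_1} x_2^{λ_2} ⋯ x_m^{λ_m} with each x_t ∈ {a_1,…,a_k}, consecutive x_t distinct, and each λ_t a nonzero integer. -/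
/-! Killing every `bᵢ` kills the relator, so `aᵢ ↦ xᵢ`, `bᵢ ↦ 1` defines a retraction
`G_k → F(x₁,…,x_k)`; it is a left inverse of `xᵢ ↦ aᵢ`, which is therefore injective. -/

/-- The single relator `∏ i, aᵢ bᵢ aᵢ⁻¹ bᵢ⁻¹` of the genus-`k` surface group. -/
def surfaceRelator (k : ℕ) : FreeGroup (Fin k ⊕ Fin k) :=
  (List.ofFn fun i : Fin k =>
    FreeGroup.of (Sum.inl i) * FreeGroup.of (Sum.inr i) *
      (FreeGroup.of (Sum.inl i))⁻¹ * (FreeGroup.of (Sum.inr i))⁻¹).prod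

/-- The genus-`k` surface group `G_k = π₁(T(k))`. -/
def SurfaceGroup (k : ℕ) : Type :=
  PresentedGroup ({surfaceRelator k} : Set (FreeGroup (Fin k ⊕ Fin k)))

instance (k : ℕ) : Group (SurfaceGroup k) := by
  unfold SurfaceGroup; infer_instance

/-- The generator `aᵢ` of the surface group. -/
def surfaceA {k : ℕ} (i : Fin k) : SurfaceGroup k :=
  PresentedGroup.of (Sum.inl i)

lemma lift_surfaceRelator_eq_one {k : ℕ} {G : Type*} [Group G] (f : Fin k ⊕ Fin k → G)
    (hf : ∀ i, f (Sum.inr i) = 1) : FreeGroup.lift f (surfaceRelator k) = 1 := by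
  rw [surfaceRelator, map_list_prod, List.map_ofFn]
  refine List.prod_eq_one fun x hx => ?_
  obtain ⟨i, rfl⟩ := List.mem_ofFn.mp hx
  simp [hf]

def surfaceRetract (k : ℕ) : SurfaceGroup k →* FreeGroup (Fin k) :=
  PresentedGroup.toGroup (f := Sum.elim FreeGroup.of 1) <| by
    rintro r rfl
    exact lift_surfaceRelator_eq_one _ fun _ => rfl

lemma surfaceRetract_comp_lift_surfaceA (k : ℕ) :
    (surfaceRetract k).comp (FreeGroup.lift surfaceA) = MonoidHom.id _ :=
  FreeGroup.ext_hom _ _ fun i => by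
    rw [MonoidHom.comp_apply, FreeGroup.lift_apply_of]
    exact PresentedGroup.toGroup.of _

theorem surfaceGroup_a_subgroup_free_general (k : ℕ) :
    Function.Injective
      (FreeGroup.lift (fun i : Fin k => surfaceA i) :
        FreeGroup (Fin k) →* SurfaceGroup k) :=
  Function.LeftInverse.injective (g := surfaceRetract k)
    (DFunLike.congr_fun (surfaceRetract_comp_lift_surfaceA k))

/-- Claim used in the proof of **Theorem 4 of the paper**: for `k ≥ 1` the subgroup of
the genus-`k` surface group generated by `a₁,…,a_k` is free on these generators, i.e.
the homomorphism `FreeGroup (Fin k) → G_k` sending the `i`-th free generator to `aᵢ`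
is injective.  Consequently every element of this subgroup has a unique reduced
expression `x₁^{λ₁} ⋯ x_m^{λ_m}` with `x_t ∈ {a₁,…,a_k}`, consecutive `x_t` distinct,
and nonzero integer exponents `λ_t`. -/
theorem surfaceGroup_a_subgroup_free (k : ℕ) (hk : 1 ≤ k) :
    Function.Injective
      (FreeGroup.lift (fun i : Fin k => surfaceA i) :
        FreeGroup (Fin k) →* SurfaceGroup k) :=
  surfaceGroup_a_subgroup_free_general k
end

section
/- For every k ≥ 1, the quotient of the genus-k surface group G_k by the normal closure of {a_1,…,a_k} is the free group of rank k on the images of b_1,…,b_k: there is a surjective group homomorphism φ : G_k → FreeGroup (Fin k) with φ(a_i) = 1 and φ(b_i) = FreeGroup.of i for all i, and φ induces a group isomorphism from G_k ⧸ (normal closure of the set {a_1,…,a_k}) onto FreeGroup (Fin k). -/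
/-- The generator `bᵢ` of the surface group. -/
def surfaceB {k : ℕ} (i : Fin k) : SurfaceGroup k :=
  PresentedGroup.of (Sum.inr i)

namespace SurfaceGroupAux

variable (k : ℕ)

lemma surf_rel : ∀ r ∈ ({surfaceRelator k} : Set (FreeGroup (Fin k ⊕ Fin k))),
    FreeGroup.lift (Sum.elim (fun _ => (1 : FreeGroup (Fin k))) FreeGroup.of) r = 1 := by
  intro r hr
  rcases hr with rfl
  unfold surfaceRelator
  rw [map_list_prod]
  have : (⇑(FreeGroup.lift (Sum.elim (fun _ => (1 : FreeGroup (Fin k))) FreeGroup.of)) ∘ fun i =>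
          FreeGroup.of (Sum.inl i) * FreeGroup.of (Sum.inr i) * (FreeGroup.of (Sum.inl i))⁻¹ *
            (FreeGroup.of (Sum.inr i))⁻¹) = fun _ => 1 := by
    funext i; simp
  rw [List.map_ofFn, this]
  simp

/-- The homomorphism killing the `aᵢ` and sending `bᵢ` to the `i`-th free generator. -/
def surfPhi : SurfaceGroup k →* FreeGroup (Fin k) :=
  PresentedGroup.toGroup (surf_rel k)

lemma surfPhi_a (i : Fin k) : surfPhi k (surfaceA i) = 1 :=
  PresentedGroup.toGroup.of (surf_rel k)

lemma surfPhi_b (i : Fin k) : surfPhi k (surfaceB i) = FreeGroup.of i :=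
  PresentedGroup.toGroup.of (surf_rel k)

/-- The normal closure of the `aᵢ`. -/
def surfN : Subgroup (SurfaceGroup k) :=
  Subgroup.normalClosure (Set.range (fun i : Fin k => surfaceA i))

instance : (surfN k).Normal := Subgroup.normalClosure_normal

lemma surfN_le_ker : surfN k ≤ (surfPhi k).ker := by
  apply Subgroup.normalClosure_le_normal
  rintro x ⟨i, rfl⟩
  simp [MonoidHom.mem_ker, surfPhi_a]

/-- The induced homomorphism on the quotient. -/
def surfEbar : SurfaceGroup k ⧸ surfN k →* FreeGroup (Fin k) :=
  QuotientGroup.lift (surfN k) (surfPhi k) (surfN_le_ker k)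

/-- The inverse homomorphism from the free group. -/
def surfPsi : FreeGroup (Fin k) →* SurfaceGroup k ⧸ surfN k :=
  FreeGroup.lift (fun i => QuotientGroup.mk (surfaceB i))

lemma surf_h1 : (surfEbar k).comp (surfPsi k) = MonoidHom.id _ := by
  apply FreeGroup.ext_hom
  intro i
  simp [surfEbar, surfPsi, surfPhi_b]

lemma surf_h2 : (surfPsi k).comp (surfEbar k) = MonoidHom.id _ := by
  have key : ((surfPsi k).comp (surfEbar k)).comp (QuotientGroup.mk' (surfN k)) =
      (MonoidHom.id _).comp (QuotientGroup.mk' (surfN k)) := by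
    apply PresentedGroup.ext
    rintro (i | i)
    · have ha : (surfaceA i : SurfaceGroup k) ∈ surfN k :=
        Subgroup.subset_normalClosure ⟨i, rfl⟩
      have h1 : QuotientGroup.mk' (surfN k) (surfaceA i) = 1 :=
        (QuotientGroup.eq_one_iff _).mpr ha
      show ((surfPsi k).comp (surfEbar k)) (QuotientGroup.mk' (surfN k) (surfaceA i)) =
        (QuotientGroup.mk' (surfN k)) (surfaceA i)
      rw [h1]
      simp
    · show ((surfPsi k).comp (surfEbar k)) (QuotientGroup.mk' (surfN k) (surfaceB i)) =
        (QuotientGroup.mk' (surfN k)) (surfaceB i)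
      simp [surfEbar, surfPsi, surfPhi_b]
  ext x
  exact DFunLike.congr_fun key x

lemma surfPhi_surjective : Function.Surjective (surfPhi k) := by
  intro y
  obtain ⟨x, hx⟩ := QuotientGroup.mk'_surjective (surfN k) (surfPsi k y)
  refine ⟨x, ?_⟩
  have h := DFunLike.congr_fun (surf_h1 k) y
  simp only [MonoidHom.comp_apply, MonoidHom.id_apply] at h
  rw [← h, ← hx]
  rfl

end SurfaceGroupAux

/-- Algebraic content of **Theorem 1(3)** and of expressions (14)–(15) in **Lemma 4**
of the paper: for `k ≥ 1`, the quotient of the genus-`k` surface group `G_k` by the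
normal closure of `{a₁,…,a_k}` is the free group of rank `k` on the images of
`b₁,…,b_k`: there is a surjective homomorphism `φ : G_k → FreeGroup (Fin k)` with
`φ(aᵢ) = 1` and `φ(bᵢ) = FreeGroup.of i`, and `φ` induces an isomorphism
`G_k ⧸ normalClosure {a₁,…,a_k} ≃* FreeGroup (Fin k)`. -/
theorem surfaceGroup_quotient_free (k : ℕ) (hk : 1 ≤ k) :
    ∃ φ : SurfaceGroup k →* FreeGroup (Fin k),
      Function.Surjective φ ∧
      (∀ i : Fin k, φ (surfaceA i) = 1) ∧
      (∀ i : Fin k, φ (surfaceB i) = FreeGroup.of i) ∧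
      ∃ e : SurfaceGroup k ⧸
          Subgroup.normalClosure (Set.range (fun i : Fin k => surfaceA i)) ≃*
            FreeGroup (Fin k),
        ∀ g : SurfaceGroup k, e (QuotientGroup.mk g) = φ g := by
  open SurfaceGroupAux in
  exact ⟨surfPhi k, surfPhi_surjective k, surfPhi_a k, surfPhi_b k,
    MonoidHom.toMulEquiv (surfEbar k) (surfPsi k) (surf_h2 k) (surf_h1 k),
    fun g => rfl⟩
end
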